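/- Let W be a channel with arbitrary input alphabet 𝒳 and finite output alphabet 𝒴 and let x^n, x'^n ∈ 𝒳^n. Then 1 − ½‖W_{x^n} − W_{x'^n}‖₁ ≤ exp(−(1/4) · ∑_{i=1}^n |√W_{x_i} − √W_{x'_i}|₂²), where exp denotes the natural exponential. -/

import Mathlib

/-!
`1 - ½‖P - Q‖₁ = ∑ min (P, Q)` is at most the Bhattacharyya coefficient `∑ √(P Q)`, which is
multiplicative over product distributions. For a single letter the coefficient equals
`1 - ½ |√P - √Q|₂²`, and `1 - t/2 ≤ 1 - t/4 ≤ exp (-t/4)`.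
-/

open Real Filter

namespace DIChannel

variable {X Y : Type*}

/-- `p` is a probability distribution on the finite alphabet `Y`. -/
def IsDist [Fintype Y] (p : Y → ℝ) : Prop := (∀ y, 0 ≤ p y) ∧ ∑ y, p y = 1

/-- Product (memoryless) output distribution `W_{x^n}` on `Y^n`. -/
noncomputable def prodP [Fintype Y] (W : X → Y → ℝ) {n : ℕ} (u : Fin n → X)
    (y : Fin n → Y) : ℝ := ∏ i, W (u i) (y i)

/-- Total variation distance `½‖p − q‖₁` between distributions on a finite set. -/
noncomputable def tvd {Z : Type*} [Fintype Z] (p q : Z → ℝ) : ℝ := (∑ z, |p z - q z|) / 2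

end DIChannel

namespace DIChannel

variable {Z : Type*} [Fintype Z]

noncomputable def bhattacharyyaCoeff (p q : Z → ℝ) : ℝ := ∑ z, √(p z * q z)

lemma one_sub_tvd_eq_sum_min {p q : Z → ℝ} (hp : IsDist p) (hq : IsDist q) :
    1 - tvd p q = ∑ z, min (p z) (q z) := by
  have abs_eq (z : Z) : |p z - q z| = p z + q z - 2 * min (p z) (q z) := by
    rw [← max_sub_min_eq_abs']
    linarith [min_add_max (p z) (q z)]
  simp only [tvd, abs_eq, Finset.sum_sub_distrib, Finset.sum_add_distrib, hp.2, hq.2,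
    ← Finset.mul_sum]
  ring

lemma one_sub_tvd_le_bhattacharyyaCoeff {p q : Z → ℝ} (hp : IsDist p) (hq : IsDist q) :
    1 - tvd p q ≤ bhattacharyyaCoeff p q := by
  rw [one_sub_tvd_eq_sum_min hp hq]
  refine Finset.sum_le_sum fun z _ => ?_
  have hmin : 0 ≤ min (p z) (q z) := le_min (hp.1 z) (hq.1 z)
  calc min (p z) (q z) = √(min (p z) (q z) * min (p z) (q z)) := (sqrt_mul_self hmin).symm
    _ ≤ √(p z * q z) :=
      sqrt_le_sqrt (mul_le_mul (min_le_left _ _) (min_le_right _ _) hmin (hp.1 z))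

lemma sum_sq_sqrt_sub_sqrt {p q : Z → ℝ} (hp : IsDist p) (hq : IsDist q) :
    ∑ z, (√(p z) - √(q z)) ^ 2 = 2 - 2 * bhattacharyyaCoeff p q := by
  have sq_eq (z : Z) : (√(p z) - √(q z)) ^ 2 = p z + q z - 2 * √(p z * q z) := by
    rw [sub_sq, sq_sqrt (hp.1 z), sq_sqrt (hq.1 z), sqrt_mul (hp.1 z)]
    ring
  simp only [bhattacharyyaCoeff, sq_eq, Finset.sum_sub_distrib, Finset.sum_add_distrib, hp.2,
    hq.2, ← Finset.mul_sum]
  ring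

lemma bhattacharyyaCoeff_le_exp {p q : Z → ℝ} (hp : IsDist p) (hq : IsDist q) :
    bhattacharyyaCoeff p q ≤ exp (-(1 / 4) * ∑ z, (√(p z) - √(q z)) ^ 2) := by
  set t := ∑ z, (√(p z) - √(q z)) ^ 2
  have ht : 0 ≤ t := Finset.sum_nonneg fun z _ => sq_nonneg _
  have hB : bhattacharyyaCoeff p q = 1 - t / 2 := by
    linarith [sum_sq_sqrt_sub_sqrt hp hq]
  linarith [add_one_le_exp (-(1 / 4) * t)]

variable {X Y : Type*} [Fintype Y]

lemma IsDist.prodP {W : X → Y → ℝ} (hW : ∀ x, IsDist (W x)) {n : ℕ} (u : Fin n → X) :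
    IsDist (prodP W u) := by
  refine ⟨fun y => Finset.prod_nonneg fun i _ => (hW (u i)).1 (y i), ?_⟩
  simp only [DIChannel.prodP, ← Fintype.prod_sum, (hW _).2, Finset.prod_const_one]

lemma bhattacharyyaCoeff_prodP {W : X → Y → ℝ} (hW : ∀ x y, 0 ≤ W x y) {n : ℕ}
    (u u' : Fin n → X) :
    bhattacharyyaCoeff (prodP W u) (prodP W u') =
      ∏ i, bhattacharyyaCoeff (W (u i)) (W (u' i)) := by
  simp only [bhattacharyyaCoeff, DIChannel.prodP, Fintype.prod_sum, ← Finset.prod_mul_distrib]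
  refine Finset.sum_congr rfl fun y _ => ?_
  exact sqrt_prod _ fun i _ => mul_nonneg (hW _ _) (hW _ _)

end DIChannel

open DIChannel

/-- Lower bound on how exponentially close to 1 the total variation distance between two
product output distributions is, in terms of the Euclidean distances of the single-letter
square-root vectors (Equation (17) of the paper). -/
theorem stmt4 {X Y : Type*} [Fintype Y] (W : X → Y → ℝ) (hW : ∀ x, IsDist (W x))
    (n : ℕ) (u u' : Fin n → X) :
    1 - tvd (prodP W u) (prodP W u') ≤
      Real.exp (-(1 / 4) * ∑ i, ∑ y, (Real.sqrt (W (u i) y) - Real.sqrt (W (u' i) y)) ^ 2) := by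
  calc 1 - tvd (prodP W u) (prodP W u')
      ≤ bhattacharyyaCoeff (prodP W u) (prodP W u') :=
        one_sub_tvd_le_bhattacharyyaCoeff (.prodP hW u) (.prodP hW u')
    _ = ∏ i, bhattacharyyaCoeff (W (u i)) (W (u' i)) :=
        bhattacharyyaCoeff_prodP (fun x => (hW x).1) u u'
    _ ≤ ∏ i, exp (-(1 / 4) * ∑ y, (√(W (u i) y) - √(W (u' i) y)) ^ 2) :=
        Finset.prod_le_prod (fun i _ => Finset.sum_nonneg fun y _ => sqrt_nonneg _)
          fun i _ => bhattacharyyaCoeff_le_exp (hW _) (hW _)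
    _ = _ := by rw [← exp_sum, Finset.mul_sum]
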